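/- arXiv:1110.6821 — 4 statements merged into one kernel-verified Lean document; each statement's English description precedes it below -/
import Mathlib

section
/- Let 𝔥 be a Hoffman graph that has a representation of norm m. Then 𝔥 has a reduced representation of norm m, and the lattice Λ(𝔥, m) is isomorphic to the orthogonal direct sum Λ^red(𝔥, m) ⊕ ℤ^{|V_f(𝔥)|}. -/
attribute [local instance] Classical.propDecidable

open scoped RealInnerProductSpace

/-- A Hoffman graph: a graph together with a labeling of its vertices as fat or slim,
such that every fat vertex has a slim neighbor and fat vertices are pairwise nonadjacent. -/
structure HoffmanGraph (V : Type*) where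
  graph : SimpleGraph V
  IsFat : V → Prop
  fat_not_adj : ∀ {x y : V}, IsFat x → IsFat y → ¬ graph.Adj x y
  fat_slim_nbr : ∀ {x : V}, IsFat x → ∃ y : V, ¬ IsFat y ∧ graph.Adj x y

namespace HoffmanGraph

variable {V : Type*}

/-- A vertex is slim if it is not fat. -/
def IsSlim (H : HoffmanGraph V) (x : V) : Prop := ¬ H.IsFat x

/-- The type of slim vertices. -/
abbrev Slim (H : HoffmanGraph V) := {v : V // H.IsSlim v}

/-- The number of fat neighbors of a vertex. -/
noncomputable def fatDeg (H : HoffmanGraph V) (x : V) : ℕ :=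
  {f : V | H.IsFat f ∧ H.graph.Adj x f}.ncard

/-- The number of common fat neighbors of two vertices. -/
noncomputable def commonFat (H : HoffmanGraph V) (x y : V) : ℕ :=
  {f : V | H.IsFat f ∧ H.graph.Adj x f ∧ H.graph.Adj y f}.ncard

lemma commonFat_comm (H : HoffmanGraph V) (x y : V) :
    H.commonFat x y = H.commonFat y x := by
  unfold commonFat
  congr 1
  ext f
  simp only [Set.mem_setOf_eq]
  tauto

/-- A Hoffman graph is fat if every slim vertex has a fat neighbor. -/
def IsFatGraph (H : HoffmanGraph V) : Prop :=
  ∀ x, H.IsSlim x → ∃ f, H.IsFat f ∧ H.graph.Adj x f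

/-- A representation of norm `m`. -/
def IsRep (H : HoffmanGraph V) (m : ℝ) {E : Type*} [NormedAddCommGroup E]
    [InnerProductSpace ℝ E] (φ : V → E) : Prop :=
  (∀ x, H.IsSlim x → ⟪φ x, φ x⟫ = m) ∧
  (∀ x, H.IsFat x → ⟪φ x, φ x⟫ = 1) ∧
  (∀ x y, H.graph.Adj x y → ⟪φ x, φ y⟫ = 1) ∧
  (∀ x y, x ≠ y → ¬ H.graph.Adj x y → ⟪φ x, φ y⟫ = 0)

/-- A reduced representation of norm `m` (only the values on slim vertices matter). -/
def IsReducedRep (H : HoffmanGraph V) (m : ℝ) {E : Type*} [NormedAddCommGroup E]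
    [InnerProductSpace ℝ E] (ψ : V → E) : Prop :=
  (∀ x, H.IsSlim x → ⟪ψ x, ψ x⟫ = m - H.fatDeg x) ∧
  (∀ x y, H.IsSlim x → H.IsSlim y → H.graph.Adj x y → ⟪ψ x, ψ y⟫ = 1 - H.commonFat x y) ∧
  (∀ x y, H.IsSlim x → H.IsSlim y → x ≠ y → ¬ H.graph.Adj x y →
    ⟪ψ x, ψ y⟫ = - (H.commonFat x y : ℝ))

/-- The matrix B(𝔥) = A_s − C Cᵀ, indexed by the slim vertices. -/
noncomputable def matrixB (H : HoffmanGraph V) : Matrix H.Slim H.Slim ℝ :=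
  fun x y => (if H.graph.Adj x.1 y.1 then (1 : ℝ) else 0) - (H.commonFat x.1 y.1 : ℝ)

/-- The smallest eigenvalue of a Hoffman graph. -/
noncomputable def lambdaMin (H : HoffmanGraph V) [Fintype V] : ℝ :=
  sInf (spectrum ℝ H.matrixB)

/-- A subset of the vertices induces a Hoffman graph iff every fat vertex of it retains
a slim neighbor inside it. -/
def IsGoodSubset (H : HoffmanGraph V) (S : Set V) : Prop :=
  ∀ x ∈ S, H.IsFat x → ∃ y ∈ S, ¬ H.IsFat y ∧ H.graph.Adj x y

/-- The induced Hoffman subgraph on a good subset. -/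
def induce (H : HoffmanGraph V) (S : Set V) (hS : H.IsGoodSubset S) : HoffmanGraph S where
  graph := H.graph.induce S
  IsFat := fun x => H.IsFat x.1
  fat_not_adj := by
    intro x y hx hy hadj
    exact H.fat_not_adj hx hy hadj
  fat_slim_nbr := by
    rintro ⟨x, hxS⟩ hx
    obtain ⟨y, hyS, hy, hadj⟩ := hS x hxS hx
    exact ⟨⟨y, hyS⟩, hy, hadj⟩

/-- An (abstract) induced Hoffman subgraph relation between Hoffman graphs. -/
def IsInducedSubgraphOf {V₁ V₂ : Type*} (H₁ : HoffmanGraph V₁) (H₂ : HoffmanGraph V₂) : Prop :=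
  ∃ e : V₁ ↪ V₂, (∀ x y, H₂.graph.Adj (e x) (e y) ↔ H₁.graph.Adj x y) ∧
    (∀ x, H₂.IsFat (e x) ↔ H₁.IsFat x)

/-- Isomorphism of Hoffman graphs. -/
def IsIsoTo {V₁ V₂ : Type*} (H₁ : HoffmanGraph V₁) (H₂ : HoffmanGraph V₂) : Prop :=
  ∃ e : V₁ ≃ V₂, (∀ x y, H₂.graph.Adj (e x) (e y) ↔ H₁.graph.Adj x y) ∧
    (∀ x, H₂.IsFat (e x) ↔ H₁.IsFat x)

/-- `H` is the sum of its induced subgraphs on `W₁` and `W₂`. -/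
structure IsSum (H : HoffmanGraph V) (W₁ W₂ : Set V) : Prop where
  nonempty₁ : W₁.Nonempty
  nonempty₂ : W₂.Nonempty
  good₁ : H.IsGoodSubset W₁
  good₂ : H.IsGoodSubset W₂
  union_eq : W₁ ∪ W₂ = Set.univ
  slim_partition : ∀ v, H.IsSlim v → (v ∈ W₁ ↔ v ∉ W₂)
  fat_closed₁ : ∀ x ∈ W₁, H.IsSlim x → ∀ f, H.IsFat f → H.graph.Adj x f → f ∈ W₁
  fat_closed₂ : ∀ x ∈ W₂, H.IsSlim x → ∀ f, H.IsFat f → H.graph.Adj x f → f ∈ W₂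
  common_le : ∀ x ∈ W₁, ∀ y ∈ W₂, H.IsSlim x → H.IsSlim y → H.commonFat x y ≤ 1
  common_iff : ∀ x ∈ W₁, ∀ y ∈ W₂, H.IsSlim x → H.IsSlim y →
    (H.commonFat x y = 1 ↔ H.graph.Adj x y)

/-- `H` is decomposable if it is the sum of two nonempty induced Hoffman subgraphs. -/
def Decomposable (H : HoffmanGraph V) : Prop := ∃ W₁ W₂ : Set V, H.IsSum W₁ W₂

def Indecomposable (H : HoffmanGraph V) : Prop := ¬ H.Decomposable

/-- `H` is the sum of the family of its induced subgraphs on `W i`. -/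
structure IsSumFamily (H : HoffmanGraph V) {n : ℕ} (W : Fin n → Set V) : Prop where
  nonempty : ∀ i, (W i).Nonempty
  good : ∀ i, H.IsGoodSubset (W i)
  union_eq : ⋃ i, W i = Set.univ
  slim_mem_unique : ∀ v, H.IsSlim v → ∃! i, v ∈ W i
  fat_closed : ∀ i, ∀ x ∈ W i, H.IsSlim x → ∀ f, H.IsFat f → H.graph.Adj x f → f ∈ W i
  common_le : ∀ i j, i ≠ j → ∀ x ∈ W i, ∀ y ∈ W j, H.IsSlim x → H.IsSlim y →
    H.commonFat x y ≤ 1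
  common_iff : ∀ i j, i ≠ j → ∀ x ∈ W i, ∀ y ∈ W j, H.IsSlim x → H.IsSlim y →
    (H.commonFat x y = 1 ↔ H.graph.Adj x y)

/-- Attach a new fat vertex (the `none` vertex) adjacent exactly to the slim vertices in `S`. -/
def attachFat (H : HoffmanGraph V) (S : Set V) (hne : S.Nonempty)
    (hslim : ∀ v ∈ S, H.IsSlim v) : HoffmanGraph (Option V) where
  graph := {
    Adj := fun a b =>
      match a, b with
      | none, none => False
      | none, some v => v ∈ S
      | some v, none => v ∈ S
      | some u, some v => H.graph.Adj u v
    symm := by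
      constructor
      rintro (_|u) (_|v) h
      · exact h.elim
      · exact h
      · exact h
      · exact h.symm
    loopless := by
      constructor
      rintro (_|u) h
      · exact h.elim
      · exact H.graph.loopless.irrefl u h }
  IsFat := fun a => match a with | none => True | some v => H.IsFat v
  fat_not_adj := by
    rintro (_|u) (_|v) hu hv h
    · exact h.elim
    · exact (hslim v h) hv
    · exact (hslim u h) hu
    · exact H.fat_not_adj hu hv h
  fat_slim_nbr := by
    rintro (_|u) hu
    · obtain ⟨s, hs⟩ := hne
      exact ⟨some s, hslim s hs, hs⟩
    · obtain ⟨y, hy, hadj⟩ := H.fat_slim_nbr hu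
      exact ⟨some y, hy, hadj⟩

/-- `H` is `μ`-saturated: it has smallest eigenvalue at least `μ` and no fat vertex can be
attached while keeping the smallest eigenvalue at least `μ`. -/
def IsSaturated (H : HoffmanGraph V) [Fintype V] (μ : ℝ) : Prop :=
  μ ≤ H.lambdaMin ∧
  ∀ (S : Set V) (hne : S.Nonempty) (hslim : ∀ v ∈ S, H.IsSlim v),
    ¬ (μ ≤ (H.attachFat S hne hslim).lambdaMin)

/-- The special graph `S⁻(𝔥)`: slim vertices, adjacent when the inner product of their
reduced representations is negative. -/
noncomputable def specialMinus (H : HoffmanGraph V) : SimpleGraph H.Slim where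
  Adj x y := x ≠ y ∧
    ((H.graph.Adj x.1 y.1 ∧ (1 : ℝ) - (H.commonFat x.1 y.1 : ℝ) < 0) ∨
     (¬ H.graph.Adj x.1 y.1 ∧ -(H.commonFat x.1 y.1 : ℝ) < 0))
  symm := by
    constructor
    rintro x y ⟨hne, h⟩
    refine ⟨hne.symm, ?_⟩
    rw [H.commonFat_comm y.1 x.1]
    rcases h with ⟨ha, hl⟩ | ⟨ha, hl⟩
    · exact Or.inl ⟨ha.symm, hl⟩
    · exact Or.inr ⟨fun hadj => ha hadj.symm, hl⟩
  loopless := ⟨fun x h => h.1 rfl⟩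

/-- The special graph `S⁺(𝔥)`: slim vertices, adjacent when the inner product of their
reduced representations is positive. -/
noncomputable def specialPlus (H : HoffmanGraph V) : SimpleGraph H.Slim where
  Adj x y := x ≠ y ∧
    ((H.graph.Adj x.1 y.1 ∧ 0 < (1 : ℝ) - (H.commonFat x.1 y.1 : ℝ)) ∨
     (¬ H.graph.Adj x.1 y.1 ∧ 0 < -(H.commonFat x.1 y.1 : ℝ)))
  symm := by
    constructor
    rintro x y ⟨hne, h⟩
    refine ⟨hne.symm, ?_⟩
    rw [H.commonFat_comm y.1 x.1]
    rcases h with ⟨ha, hl⟩ | ⟨ha, hl⟩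
    · exact Or.inl ⟨ha.symm, hl⟩
    · exact Or.inr ⟨fun hadj => ha hadj.symm, hl⟩
  loopless := ⟨fun x h => h.1 rfl⟩

/-- The special graph `S(𝔥)`, the union of `S⁻(𝔥)` and `S⁺(𝔥)`. -/
noncomputable def special (H : HoffmanGraph V) : SimpleGraph H.Slim :=
  H.specialMinus ⊔ H.specialPlus

/-- `⟨S⟩_𝔥`: the set `S` together with all fat neighbors of its members. -/
def closureSet (H : HoffmanGraph V) (S : Set V) : Set V :=
  S ∪ {f | H.IsFat f ∧ ∃ x ∈ S, H.graph.Adj x f}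

/-- The Hoffman graph `𝔥^(t)` with one slim vertex (`none`) and `t` fat vertices. -/
def manyFat (t : ℕ) : HoffmanGraph (Option (Fin t)) where
  graph := {
    Adj := fun a b => (a = none ∧ b ≠ none) ∨ (a ≠ none ∧ b = none)
    symm := by
      constructor
      rintro a b (⟨h1, h2⟩ | ⟨h1, h2⟩)
      · exact Or.inr ⟨h2, h1⟩
      · exact Or.inl ⟨h2, h1⟩
    loopless := by
      constructor
      rintro a (⟨h1, h2⟩ | ⟨h1, h2⟩)
      · exact h2 h1
      · exact h1 h2 }
  IsFat := fun a => a ≠ none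
  fat_not_adj := by
    rintro a b ha hb (⟨h1, _⟩ | ⟨_, h1⟩)
    · exact ha h1
    · exact hb h1
  fat_slim_nbr := by
    intro a ha
    refine ⟨none, by simp, Or.inr ⟨ha, rfl⟩⟩

/-- An ordinary (slim) graph regarded as a Hoffman graph. -/
def ofSimple {W : Type*} (G : SimpleGraph W) : HoffmanGraph W where
  graph := G
  IsFat := fun _ => False
  fat_not_adj := by intro x y hx _ _; exact hx
  fat_slim_nbr := by intro x hx; exact hx.elim

end HoffmanGraph
namespace HoffmanGraph

variable {V : Type*}

/-- The Hoffman graph obtained by replacing the fat vertices `f i` by slim cliques of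
sizes `n i`, joining all neighbors of `f i` to all vertices of the `i`-th clique. -/
def blowup {k : ℕ} (H : HoffmanGraph V) (f : Fin k → V) (hf : ∀ i, H.IsFat (f i))
    (n : Fin k → ℕ) :
    HoffmanGraph ({v : V // v ∉ Set.range f} ⊕ (Σ i : Fin k, Fin (n i))) where
  graph := {
    Adj := fun a b =>
      match a, b with
      | .inl u, .inl v => H.graph.Adj u.1 v.1
      | .inl u, .inr x => H.graph.Adj u.1 (f x.1)
      | .inr x, .inl v => H.graph.Adj (f x.1) v.1
      | .inr x, .inr y => x ≠ y ∧ x.1 = y.1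
    symm := by
      constructor
      rintro (u|x) (v|y) h
      · exact h.symm
      · exact h.symm
      · exact h.symm
      · exact ⟨h.1.symm, h.2.symm⟩
    loopless := by
      constructor
      rintro (u|x) h
      · exact H.graph.loopless.irrefl _ h
      · exact h.1 rfl }
  IsFat := fun a => match a with | .inl u => H.IsFat u.1 | .inr _ => False
  fat_not_adj := by
    rintro (u|x) (v|y) hu hv h
    · exact H.fat_not_adj hu hv h
    · exact hv
    · exact hu
    · exact hu
  fat_slim_nbr := by
    rintro (u|x) hu
    · obtain ⟨y, hy, hadj⟩ := H.fat_slim_nbr hu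
      refine ⟨Sum.inl ⟨y, ?_⟩, hy, hadj⟩
      rintro ⟨i, rfl⟩
      exact hy (hf i)
    · exact hu.elim

/-- The slim graph obtained by replacing every fat vertex by a slim `n`-clique,
joining all neighbors of a fat vertex to all vertices of its clique. -/
def blowupAll (H : HoffmanGraph V) (n : ℕ) :
    HoffmanGraph (H.Slim ⊕ ({f : V // H.IsFat f} × Fin n)) where
  graph := {
    Adj := fun a b =>
      match a, b with
      | .inl u, .inl v => H.graph.Adj u.1 v.1
      | .inl u, .inr x => H.graph.Adj u.1 x.1.1
      | .inr x, .inl v => H.graph.Adj x.1.1 v.1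
      | .inr x, .inr y => x ≠ y ∧ x.1 = y.1
    symm := by
      constructor
      rintro (u|x) (v|y) h
      · exact h.symm
      · exact h.symm
      · exact h.symm
      · exact ⟨h.1.symm, h.2.symm⟩
    loopless := by
      constructor
      rintro (u|x) h
      · exact H.graph.loopless.irrefl _ h
      · exact h.1 rfl }
  IsFat := fun _ => False
  fat_not_adj := by intro x y hx _; exact hx.elim
  fat_slim_nbr := by intro x hx; exact hx.elim

/-- The Hoffman graph of Example 4.2: slim vertices `ℤ/4ℤ` (the `inl`'s), fat vertices
`f_j` for `j ∈ ℤ/4ℤ` (the `inr`'s), with edges `{0,2}`, `{1,3}` and `{i, f_j}` for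
`i = j` or `i = j + 1`. -/
def exampleA3tilde : HoffmanGraph (ZMod 4 ⊕ ZMod 4) where
  graph := {
    Adj := fun a b =>
      match a, b with
      | .inl i, .inl j => j = i + 2
      | .inl i, .inr j => i = j ∨ i = j + 1
      | .inr j, .inl i => i = j ∨ i = j + 1
      | .inr _, .inr _ => False
    symm := by
      have h4 : (2 : ZMod 4) + 2 = 0 := by decide
      constructor
      rintro (i|i) (j|j) h
      · have h' : j = i + 2 := h
        subst h'
        show i = i + 2 + 2
        rw [add_assoc, h4, add_zero]
      · exact h
      · exact h
      · exact h.elim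
    loopless := by
      constructor
      rintro (i|i) h
      · exact absurd (left_eq_add.mp h) (by decide)
      · exact h }
  IsFat := fun a => match a with | .inl _ => False | .inr _ => True
  fat_not_adj := by
    rintro (i|i) (j|j) hx hy h
    · exact hx
    · exact hx
    · exact hy
    · exact h
  fat_slim_nbr := by
    rintro (i|i) hx
    · exact hx.elim
    · exact ⟨Sum.inl i, id, Or.inl rfl⟩

end HoffmanGraph

/-- The extended Dynkin graph `D̃₄`, i.e. the star `K_{1,4}`. -/
def tildeD4Graph : SimpleGraph (Fin 5) := SimpleGraph.fromRel (fun a _ => a = 0)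

/-- The Dynkin graph `A_m`: the path on `m` vertices. -/
def dynkinA (m : ℕ) : SimpleGraph (Fin m) :=
  SimpleGraph.fromRel (fun i j => i.1 + 1 = j.1)

/-- The extended Dynkin graph `Ã_m`: the cycle on `m + 1` vertices. -/
def tildeA (m : ℕ) : SimpleGraph (ZMod (m + 1)) :=
  SimpleGraph.fromRel (fun i j => i + 1 = j)

/-- The Dynkin graph `D_m`: the path `1 - 2 - ⋯ - (m-1)` with the extra vertex `0`
attached to the vertex `2`. -/
def dynkinD (m : ℕ) : SimpleGraph (Fin m) :=
  SimpleGraph.fromRel (fun i j => (1 ≤ i.1 ∧ i.1 + 1 = j.1) ∨ (i.1 = 0 ∧ j.1 = 2))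

/-- The extended Dynkin graph `D̃_m` on `m + 1` vertices: the path `1 - 2 - ⋯ - (m-1)`
with the extra vertex `0` attached to `2` and the extra vertex `m` attached to `m - 2`. -/
def tildeD (m : ℕ) : SimpleGraph (Fin (m + 1)) :=
  SimpleGraph.fromRel (fun i j =>
    (1 ≤ i.1 ∧ i.1 + 1 = j.1 ∧ j.1 ≤ m - 1) ∨ (i.1 = 0 ∧ j.1 = 2) ∨ (i.1 = m ∧ j.1 = m - 2))

/-! The fat vectors of a representation `φ` are orthonormal, and for a slim vertex `x` the
projection of `φ x` onto their span is `∑_{f ∈ N^f(x)} φ f`. Subtracting it leaves vectors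
`ψ x` orthogonal to every fat vector whose Gram matrix is that of a reduced representation.
Since the subtracted part has integer coefficients, `Λ(𝔥, m)` is generated by the `ψ x`
together with the fat vectors, and orthonormality of the latter makes this sum orthogonal and
direct. -/

section OrthonormalResidual

variable {E : Type*} [NormedAddCommGroup E] [InnerProductSpace ℝ E] {ι : Type*} [Fintype ι]

def orthoResidual (b : ι → E) (v : E) : E := v - ∑ i, ⟪b i, v⟫ • b i

variable {b : ι → E}

lemma Orthonormal.inner_orthoResidual (hb : Orthonormal ℝ b) (i : ι) (v : E) :
    ⟪b i, orthoResidual b v⟫ = 0 := by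
  rw [orthoResidual, inner_sub_right, hb.inner_right_fintype, sub_self]

lemma Orthonormal.inner_orthoResidual_orthoResidual (hb : Orthonormal ℝ b) (u v : E) :
    ⟪orthoResidual b u, orthoResidual b v⟫ =
      ⟪u, v⟫ - ∑ i, ⟪b i, u⟫ * ⟪b i, v⟫ := by
  have hperp : ⟪orthoResidual b u, ∑ i, ⟪b i, v⟫ • b i⟫ = 0 := by
    simp only [inner_sum, real_inner_smul_right, real_inner_comm, hb.inner_orthoResidual,
      mul_zero, Finset.sum_const_zero]
  calc ⟪orthoResidual b u, orthoResidual b v⟫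
      = ⟪orthoResidual b u, v⟫ - ⟪orthoResidual b u, ∑ i, ⟪b i, v⟫ • b i⟫ :=
        inner_sub_right _ _ _
    _ = ⟪u - ∑ i, ⟪b i, u⟫ • b i, v⟫ := by rw [hperp, sub_zero]; rfl
    _ = ⟪u, v⟫ - ∑ i, ⟪b i, u⟫ * ⟪b i, v⟫ := by
      simp only [inner_sub_left, sum_inner, real_inner_smul_left]

lemma sum_inner_smul_mem_span_int {v : E} (hv : ∀ i, ∃ n : ℤ, ⟪b i, v⟫ = n) :
    ∑ i, ⟪b i, v⟫ • b i ∈ Submodule.span ℤ (Set.range b) := by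
  refine Submodule.sum_mem _ fun i _ => ?_
  obtain ⟨n, hn⟩ := hv i
  rw [hn, Int.cast_smul_eq_zsmul]
  exact Submodule.smul_mem _ n (Submodule.subset_span ⟨i, rfl⟩)

variable (L : Submodule ℤ E)

lemma Orthonormal.inner_coprod_linearCombination (hb : Orthonormal ℝ b)
    (hL : ∀ w ∈ L, ∀ i, ⟪b i, w⟫ = 0) (p q : L × (ι → ℤ)) :
    ⟪L.subtype.coprod (Fintype.linearCombination ℤ b) p,
      L.subtype.coprod (Fintype.linearCombination ℤ b) q⟫ =
      ⟪(p.1 : E), q.1⟫ + ∑ i, (p.2 i : ℝ) * q.2 i := by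
  have hcast (a : ι → ℤ) : Fintype.linearCombination ℤ b a = ∑ i, (a i : ℝ) • b i := by
    simp only [Fintype.linearCombination_apply, Int.cast_smul_eq_zsmul]
  have hperp (w : L) (a : ι → ℤ) : ⟪∑ i, (a i : ℝ) • b i, (w : E)⟫ = 0 := by
    rw [sum_inner]
    exact Finset.sum_eq_zero fun i _ => by rw [real_inner_smul_left, hL w w.2, mul_zero]
  simp only [LinearMap.coprod_apply, Submodule.subtype_apply, hcast, inner_add_left,
    inner_add_right, hperp, real_inner_comm _ (p.1 : E), hb.inner_sum, conj_trivial]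
  ring

lemma Orthonormal.injective_coprod_linearCombination (hb : Orthonormal ℝ b)
    (hL : ∀ w ∈ L, ∀ i, ⟪b i, w⟫ = 0) :
    Function.Injective (L.subtype.coprod (Fintype.linearCombination ℤ b)) := by
  rw [injective_iff_map_eq_zero]
  intro p hp
  have hnorm := hb.inner_coprod_linearCombination L hL p p
  rw [hp, inner_zero_left] at hnorm
  have hw : 0 ≤ ⟪(p.1 : E), p.1⟫ := real_inner_self_nonneg
  have ha : 0 ≤ ∑ i, (p.2 i : ℝ) * p.2 i :=
    Finset.sum_nonneg fun i _ => mul_self_nonneg _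
  obtain ⟨hw0, ha0⟩ := (add_eq_zero_iff_of_nonneg hw ha).1 hnorm.symm
  rw [Finset.sum_eq_zero_iff_of_nonneg fun i _ => mul_self_nonneg _] at ha0
  ext1
  · exact Subtype.ext (inner_self_eq_zero.1 hw0)
  · funext i
    exact_mod_cast mul_self_eq_zero.1 (ha0 i (Finset.mem_univ i))

theorem Orthonormal.exists_linearEquiv_sup_span_int (hb : Orthonormal ℝ b)
    (hL : ∀ w ∈ L, ∀ i, ⟪b i, w⟫ = 0) :
    ∃ g : ↥(L ⊔ Submodule.span ℤ (Set.range b)) ≃ₗ[ℤ] L × (ι → ℤ),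
      ∀ u v : ↥(L ⊔ Submodule.span ℤ (Set.range b)),
        ⟪(u : E), v⟫ = ⟪((g u).1 : E), (g v).1⟫ + ∑ i, ((g u).2 i : ℝ) * (g v).2 i := by
  set F := L.subtype.coprod (Fintype.linearCombination ℤ b)
  have hrange : LinearMap.range F = L ⊔ Submodule.span ℤ (Set.range b) := by
    rw [LinearMap.range_coprod, Submodule.range_subtype, Fintype.range_linearCombination]
  let e := (LinearEquiv.ofInjective F (hb.injective_coprod_linearCombination L hL)).trans
    (LinearEquiv.ofEq _ _ hrange)
  have he (u : ↥(L ⊔ Submodule.span ℤ (Set.range b))) : (u : E) = F (e.symm u) := by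
    conv_lhs => rw [← e.apply_symm_apply u]
    rfl
  exact ⟨e.symm, fun u v => by rw [he u, he v, hb.inner_coprod_linearCombination L hL]⟩

end OrthonormalResidual

namespace HoffmanGraph

variable {V : Type*} (H : HoffmanGraph V)

lemma commonFat_eq_sum [Fintype V] (x y : V) :
    (H.commonFat x y : ℝ) = ∑ f : {f // H.IsFat f},
      (if H.graph.Adj x f then 1 else 0) * (if H.graph.Adj y f then 1 else 0) := by
  simp only [ite_zero_mul_ite_zero, one_mul]
  rw [Finset.sum_boole, commonFat, Set.ncard_eq_toFinset_card', Set.toFinset_ofPred,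
    ← Fintype.card_subtype, ← Fintype.card_subtype]
  exact congrArg _ (Fintype.card_congr (Equiv.subtypeSubtypeEquivSubtypeInter _ _).symm)

lemma commonFat_self (x : V) : H.commonFat x x = H.fatDeg x := by
  simp only [commonFat, fatDeg, and_self]

variable {E : Type*} [NormedAddCommGroup E] [InnerProductSpace ℝ E]

/-- For slim `x` the coefficients `⟪φ f, φ x⟫` are the fat-adjacency indicators, so this is
`φ x - ∑_{f ∈ N^f(x)} φ f`. -/
noncomputable def reducedRep [Fintype V] (φ : V → E) (x : V) : E :=
  orthoResidual (fun f : {f // H.IsFat f} => φ f) (φ x)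

variable {H} {m : ℝ} {φ : V → E}

lemma IsRep.orthonormal_fat (hφ : H.IsRep m φ) :
    Orthonormal ℝ (fun f : {f // H.IsFat f} => φ f) :=
  orthonormal_iff_ite.2 fun f g => by
    split_ifs with h
    · rw [h]; exact hφ.2.1 g g.2
    · exact hφ.2.2.2 f g (Subtype.coe_ne_coe.2 h) (H.fat_not_adj f.2 g.2)

lemma IsRep.inner_fat_slim (hφ : H.IsRep m φ) {f x : V} (hf : H.IsFat f) (hx : H.IsSlim x) :
    ⟪φ f, φ x⟫ = if H.graph.Adj x f then 1 else 0 := by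
  split_ifs with h
  · exact hφ.2.2.1 f x h.symm
  · exact hφ.2.2.2 f x (fun hfx => hx (hfx ▸ hf)) (fun hfx => h hfx.symm)

variable [Fintype V]

lemma IsRep.isReducedRep_reducedRep (hφ : H.IsRep m φ) :
    H.IsReducedRep m (H.reducedRep φ) := by
  have hinner {x y : V} (hx : H.IsSlim x) (hy : H.IsSlim y) :
      ⟪H.reducedRep φ x, H.reducedRep φ y⟫ = ⟪φ x, φ y⟫ - H.commonFat x y := by
    rw [reducedRep, reducedRep, hφ.orthonormal_fat.inner_orthoResidual_orthoResidual,
      commonFat_eq_sum]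
    simp only [hφ.inner_fat_slim (Subtype.prop _) hx, hφ.inner_fat_slim (Subtype.prop _) hy]
  refine ⟨fun x hx => ?_, fun x y hx hy hxy => ?_, fun x y hx hy hne hxy => ?_⟩
  · rw [hinner hx hx, hφ.1 x hx, commonFat_self]
  · rw [hinner hx hy, hφ.2.2.1 x y hxy]
  · rw [hinner hx hy, hφ.2.2.2 x y hne hxy, zero_sub]

lemma IsRep.inner_fat_eq_zero_of_mem_span_reducedRep (hφ : H.IsRep m φ) {w : E}
    (hw : w ∈ Submodule.span ℤ (H.reducedRep φ '' {v | H.IsSlim v})) (f : {f // H.IsFat f}) :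
    ⟪φ f, w⟫ = 0 := by
  refine Submodule.mem_orthogonal_singleton_iff_inner_right.1
    ((Submodule.span_le (p := (ℝ ∙ φ f)ᗮ.restrictScalars ℤ)).2 ?_ hw)
  rintro _ ⟨v, -, rfl⟩
  exact Submodule.mem_orthogonal_singleton_iff_inner_right.2
    (hφ.orthonormal_fat.inner_orthoResidual f (φ v))

lemma IsRep.span_range_eq_sup (hφ : H.IsRep m φ) :
    Submodule.span ℤ (Set.range φ) =
      Submodule.span ℤ (H.reducedRep φ '' {v | H.IsSlim v}) ⊔
        Submodule.span ℤ (Set.range (fun f : {f // H.IsFat f} => φ f)) := by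
  have hcoeff {x : V} (hx : H.IsSlim x) (f : {f // H.IsFat f}) :
      ∃ n : ℤ, ⟪φ f, φ x⟫ = n := by
    rw [hφ.inner_fat_slim f.2 hx]
    split_ifs
    exacts [⟨1, Int.cast_one.symm⟩, ⟨0, Int.cast_zero.symm⟩]
  apply le_antisymm
  · rw [Submodule.span_le]
    rintro _ ⟨v, rfl⟩
    by_cases hv : H.IsFat v
    · exact Submodule.mem_sup_right (Submodule.subset_span ⟨⟨v, hv⟩, rfl⟩)
    · rw [← sub_add_cancel (φ v) (∑ f : {f // H.IsFat f}, ⟪φ f, φ v⟫ • φ f)]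
      exact add_mem (Submodule.mem_sup_left (Submodule.subset_span ⟨v, hv, rfl⟩))
        (Submodule.mem_sup_right (sum_inner_smul_mem_span_int (hcoeff hv)))
  · have hfat : Submodule.span ℤ (Set.range (fun f : {f // H.IsFat f} => φ f)) ≤
        Submodule.span ℤ (Set.range φ) :=
      Submodule.span_mono (Set.range_comp_subset_range _ φ)
    refine sup_le (Submodule.span_le.2 ?_) hfat
    rintro _ ⟨v, hv, rfl⟩
    exact sub_mem (Submodule.subset_span ⟨v, rfl⟩)
      (hfat (sum_inner_smul_mem_span_int (hcoeff hv)))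

end HoffmanGraph

/-- Lemma 2.7: if a Hoffman graph has a representation of norm `m`, then it has a reduced
representation of norm `m`, and `Λ(𝔥,m) ≅ Λ^red(𝔥,m) ⊕ ℤ^{|V_f(𝔥)|}` as lattices
(i.e. there is a `ℤ`-linear equivalence turning the inner product into the orthogonal
direct sum of the inner product on `Λ^red(𝔥,m)` and the standard form on `ℤ^{|V_f(𝔥)|}`). -/
theorem representation_gives_reduced_representation_and_lattice_decomposition
    {V : Type} [Fintype V] (H : HoffmanGraph V) (m : ℝ) (d : ℕ)
    (φ : V → EuclideanSpace ℝ (Fin d)) (hφ : H.IsRep m φ) :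
    ∃ (e : ℕ) (ψ : V → EuclideanSpace ℝ (Fin e)), H.IsReducedRep m ψ ∧
      ∃ g : (Submodule.span ℤ (Set.range φ)) ≃ₗ[ℤ]
          ((Submodule.span ℤ (ψ '' {v | H.IsSlim v})) × ({f : V // H.IsFat f} → ℤ)),
        ∀ u v : Submodule.span ℤ (Set.range φ),
          ⟪(u : EuclideanSpace ℝ (Fin d)), (v : EuclideanSpace ℝ (Fin d))⟫ =
            ⟪((g u).1 : EuclideanSpace ℝ (Fin e)), ((g v).1 : EuclideanSpace ℝ (Fin e))⟫ +
              ∑ f : {f : V // H.IsFat f}, ((g u).2 f : ℝ) * ((g v).2 f : ℝ) := by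
  obtain ⟨g, hg⟩ := hφ.orthonormal_fat.exists_linearEquiv_sup_span_int _
    fun w hw => hφ.inner_fat_eq_zero_of_mem_span_reducedRep hw
  let e := LinearEquiv.ofEq _ _ hφ.span_range_eq_sup
  exact ⟨d, H.reducedRep φ, hφ.isReducedRep_reducedRep, e.trans g,
    fun u v => hg (e u) (e v)⟩
end

section
/- Let 𝔊 be a Hoffman graph whose vertex set is partitioned as V₁ ∪ V₂ ∪ V₃ such that: (i) V₂ ∪ V₃ consists of slim vertices; (ii) there are no edges between V₁ and V₃; (iii) every vertex of V₂ is adjacent to every vertex of V₃; (iv) V₃ is a clique. Let 𝔥 be the Hoffman graph with vertex set V₁ ∪ V₂ ∪ {f}, where f is a new fat vertex adjacent exactly to all vertices of V₂, and with the induced edges and labels on V₁ ∪ V₂. If 𝔊 has a representation of norm m, then 𝔥 has a representation of norm m + (m − 1)|V₂| / (|V₃| + m − 1). -/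
attribute [local instance] Classical.propDecidable

open scoped RealInnerProductSpace

/-! Let `s` be the sum of the vectors of the clique `V₃` and `f = s / ‖s‖`. The vectors of `V₁`
are orthogonal to `f`, while every vector of `V₂` has the same component `l = |V₃| / ‖s‖` along
`f`, where `1 - l² = (m - 1) / (|V₃| + m - 1)`. Shifting the vectors of `V₂` by `(1 - l) f` makes
this component `1`, so `f` can represent the new fat vertex, at the cost of raising the inner
products within `V₂` by `1 - l²`. In an orthogonal summand the vectors
`√(|V₂| (1 - l²)) (e_x - 𝟙_{V₂} / |V₂|)` for `x ∈ V₂` and `√(|V₂| (1 - l²)) e_x` for the other slim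
`x` cancel that excess and raise every slim norm by `|V₂| (1 - l²)`. -/

lemma card_filter_val_mem_eq_ncard {α : Type*} {s t : Set α} [Fintype t] (h : s ⊆ t) :
    (Finset.univ.filter fun x : t => x.1 ∈ s).card = s.ncard := by
  have hs : ((Finset.univ.filter fun x : t => x.1 ∈ s) : Set t) = Subtype.val ⁻¹' s := by
    ext x
    simp
  rw [← Set.ncard_coe_finset, hs, Set.ncard_preimage_of_injective_subset_range
    Subtype.val_injective fun x hx => ⟨⟨x, h hx⟩, rfl⟩]

section InnerProduct

variable {ι F : Type*} [NormedAddCommGroup F] [InnerProductSpace ℝ F]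

noncomputable def centeredFamily [DecidableEq ι] (e : ι → F) (S : Finset ι) (i : ι) : F :=
  e i - if i ∈ S then (S.card : ℝ)⁻¹ • ∑ j ∈ S, e j else 0

lemma Orthonormal.inner_centeredFamily [DecidableEq ι] {e : ι → F} (he : Orthonormal ℝ e)
    (S : Finset ι) (i j : ι) :
    ⟪centeredFamily e S i, centeredFamily e S j⟫ =
      (if i = j then 1 else 0) - if i ∈ S ∧ j ∈ S then (S.card : ℝ)⁻¹ else 0 := by
  have hee : ∀ i j, ⟪e i, e j⟫ = if i = j then 1 else 0 := orthonormal_iff_ite.mp he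
  have hew : ∀ i, ⟪e i, ∑ j ∈ S, e j⟫ = if i ∈ S then 1 else 0 := by
    intro i
    simp [inner_sum, hee]
  have hww : ‖∑ j ∈ S, e j‖ ^ 2 = S.card := by
    rw [← real_inner_self_eq_norm_sq, sum_inner,
      Finset.sum_congr rfl fun j hj => by rw [hew, if_pos hj]]
    simp
  unfold centeredFamily
  by_cases hi : i ∈ S <;> by_cases hj : j ∈ S
  · have hS : (S.card : ℝ)⁻¹ * S.card = 1 :=
      inv_mul_cancel₀ (Nat.cast_ne_zero.mpr (Finset.card_ne_zero_of_mem hi))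
    simp [inner_sub_left, inner_sub_right, inner_smul_left, inner_smul_right,
      real_inner_comm, hee, hew, hww, hi, hj, hS]
  all_goals simp [inner_sub_left, inner_sub_right, inner_smul_left, inner_smul_right,
    real_inner_comm, hee, hew, hi, hj]

lemma inner_indicator_indicator (P : Set ι) (g : ι → F) (i j : ι) :
    ⟪P.indicator g i, P.indicator g j⟫ = if i ∈ P ∧ j ∈ P then ⟪g i, g j⟫ else 0 := by
  by_cases hi : i ∈ P <;> by_cases hj : j ∈ P <;> simp [hi, hj]

variable {φ : ι → F} {f : F} {S : Set ι} [DecidablePred (· ∈ S)] {l : ℝ}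

lemma inner_add_ite_smul (hf : ⟪f, f⟫ = 1) (hφf : ∀ i, ⟪φ i, f⟫ = if i ∈ S then l else 0)
    (i j : ι) :
    ⟪φ i + (if i ∈ S then 1 - l else 0) • f, φ j + (if j ∈ S then 1 - l else 0) • f⟫ =
      ⟪φ i, φ j⟫ + if i ∈ S ∧ j ∈ S then 1 - l ^ 2 else 0 := by
  have hfφ : ∀ i, ⟪f, φ i⟫ = if i ∈ S then l else 0 := fun i => by rw [real_inner_comm, hφf]
  simp only [inner_add_left, inner_add_right, real_inner_smul_left, real_inner_smul_right, hφf,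
    hfφ, hf]
  by_cases hi : i ∈ S <;> by_cases hj : j ∈ S <;>
    simp only [hi, hj, and_self, and_true, and_false, if_true, if_false] <;> ring

lemma inner_unit_add_ite_smul (hf : ⟪f, f⟫ = 1)
    (hφf : ∀ i, ⟪φ i, f⟫ = if i ∈ S then l else 0) (j : ι) :
    ⟪f, φ j + (if j ∈ S then 1 - l else 0) • f⟫ = if j ∈ S then 1 else 0 := by
  rw [inner_add_right, real_inner_comm, hφf, real_inner_smul_right, hf]
  by_cases hj : j ∈ S <;> simp [hj]

end InnerProduct

namespace HoffmanGraph

section Representation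

variable {V E : Type*} [NormedAddCommGroup E] [InnerProductSpace ℝ E]

noncomputable def repGram (H : HoffmanGraph V) (m : ℝ) (x y : V) : ℝ :=
  if x = y then (if H.IsFat x then 1 else m) else if H.graph.Adj x y then 1 else 0

lemma isRep_iff_inner_eq_repGram {H : HoffmanGraph V} {m : ℝ} {φ : V → E} :
    H.IsRep m φ ↔ ∀ x y, ⟪φ x, φ y⟫ = H.repGram m x y := by
  constructor
  · rintro ⟨hslim, hfat, hadj, hnadj⟩ x y
    unfold repGram
    split_ifs with hxy hx hxy'
    · subst hxy; exact hfat x hx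
    · subst hxy; exact hslim x hx
    · exact hadj x y hxy'
    · exact hnadj x y hxy hxy'
  · intro h
    refine ⟨fun x hx => ?_, fun x hx => ?_, fun x y hxy => ?_, fun x y hne hxy => ?_⟩
    · rw [h, repGram, if_pos rfl, if_neg hx]
    · rw [h, repGram, if_pos rfl, if_pos hx]
    · simp [h, repGram, hxy, H.graph.ne_of_adj hxy]
    · simp [h, repGram, hxy, hne]

lemma IsRep.exists_euclideanSpace [FiniteDimensional ℝ E] {H : HoffmanGraph V} {m : ℝ}
    {φ : V → E} (hφ : H.IsRep m φ) :
    ∃ (e : ℕ) (φ' : V → EuclideanSpace ℝ (Fin e)), H.IsRep m φ' := by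
  refine ⟨_, fun x => (stdOrthonormalBasis ℝ E).repr (φ x), ?_⟩
  simpa [isRep_iff_inner_eq_repGram, LinearIsometryEquiv.inner_map_map] using hφ

variable {G : HoffmanGraph V} {m : ℝ} {φ : V → E}

lemma IsRep.inner_comp_eq_repGram_some (hφ : G.IsRep m φ) {ι : Type*}
    {H : HoffmanGraph (Option ι)} {e : ι → V} (he : Function.Injective e)
    (hadj : ∀ x y, H.graph.Adj (some x) (some y) ↔ G.graph.Adj (e x) (e y))
    (hfat : ∀ x, H.IsFat (some x) ↔ G.IsFat (e x)) (x y : ι) :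
    ⟪φ (e x), φ (e y)⟫ = H.repGram m (some x) (some y) := by
  simp [isRep_iff_inner_eq_repGram.1 hφ, repGram, hadj, hfat, he.eq_iff]

lemma IsRep.one_le_of_adj (hφ : G.IsRep m φ) {x y : V} (hx : G.IsSlim x) (hy : G.IsSlim y)
    (hxy : G.graph.Adj x y) : 1 ≤ m := by
  have hcs := real_inner_mul_inner_self_le (φ x) (φ y)
  have hm : 0 ≤ m := hφ.1 x hx ▸ real_inner_self_nonneg
  rw [hφ.2.2.1 x y hxy, hφ.1 x hx, hφ.1 y hy] at hcs
  nlinarith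

lemma IsRep.inner_sum_of_forall_adj (hφ : G.IsRep m φ) {T : Finset V} {x : V}
    (hx : ∀ z ∈ T, G.graph.Adj x z) : ⟪φ x, ∑ z ∈ T, φ z⟫ = T.card := by
  rw [inner_sum, Finset.sum_congr rfl fun z hz => hφ.2.2.1 x z (hx z hz)]
  simp

lemma IsRep.inner_sum_of_forall_not_adj (hφ : G.IsRep m φ) {T : Finset V} {x : V}
    (hx : ∀ z ∈ T, x ≠ z ∧ ¬ G.graph.Adj x z) : ⟪φ x, ∑ z ∈ T, φ z⟫ = 0 := by
  rw [inner_sum]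
  exact Finset.sum_eq_zero fun z hz => hφ.2.2.2 x z (hx z hz).1 (hx z hz).2

lemma IsRep.inner_sum_self_of_isClique (hφ : G.IsRep m φ) {T : Finset V}
    (hslim : ∀ z ∈ T, G.IsSlim z) (hT : G.graph.IsClique (T : Set V)) :
    ⟪∑ z ∈ T, φ z, ∑ z ∈ T, φ z⟫ = T.card * (T.card + m - 1) := by
  have hrow : ∀ z ∈ T, ⟪φ z, ∑ z' ∈ T, φ z'⟫ = T.card + m - 1 := by
    intro z hz
    have hadj : ∀ z' ∈ T.erase z, G.graph.Adj z z' := fun z' hz' =>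
      hT hz (Finset.mem_of_mem_erase hz') (Finset.ne_of_mem_erase hz').symm
    rw [← Finset.add_sum_erase T _ hz, inner_add_right, hφ.1 z (hslim z hz),
      hφ.inner_sum_of_forall_adj hadj, Finset.card_erase_of_mem hz,
      Nat.cast_sub (Finset.card_pos.mpr ⟨z, hz⟩)]
    ring
  rw [sum_inner, Finset.sum_congr rfl hrow, Finset.sum_const, nsmul_eq_mul]

lemma IsRep.exists_unit_of_isClique (hφ : G.IsRep m φ) (hm : 1 ≤ m) {T : Finset V}
    (hT : T.Nonempty) (hslim : ∀ z ∈ T, G.IsSlim z) (hclique : G.graph.IsClique (T : Set V)) :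
    ∃ (f : E) (l : ℝ), ⟪f, f⟫ = 1 ∧ 1 - l ^ 2 = (m - 1) / (T.card + m - 1) ∧
      (∀ x, (∀ z ∈ T, G.graph.Adj x z) → ⟪φ x, f⟫ = l) ∧
      (∀ x, (∀ z ∈ T, x ≠ z ∧ ¬ G.graph.Adj x z) → ⟪φ x, f⟫ = 0) := by
  set s := ∑ z ∈ T, φ z
  have hcard : (1 : ℝ) ≤ T.card := Nat.one_le_cast.mpr hT.card_pos
  have hss : ‖s‖ ^ 2 = T.card * (T.card + m - 1) := by
    rw [← real_inner_self_eq_norm_sq, hφ.inner_sum_self_of_isClique hslim hclique]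
  have hs : ‖s‖ ≠ 0 := by
    intro h
    rw [h] at hss
    nlinarith
  have hq : (T.card : ℝ) + m - 1 ≠ 0 := by linarith
  refine ⟨‖s‖⁻¹ • s, T.card / ‖s‖, ?_, ?_, fun x hx => ?_, fun x hx => ?_⟩
  · rw [real_inner_smul_left, real_inner_smul_right, real_inner_self_eq_norm_sq]
    field_simp
  · rw [div_pow, hss]
    field_simp
    ring
  · rw [real_inner_smul_right, hφ.inner_sum_of_forall_adj hx, inv_mul_eq_div]
  · rw [real_inner_smul_right, hφ.inner_sum_of_forall_not_adj hx, mul_zero]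

end Representation

theorem exists_isRep_option_of_inner_unit {ι E : Type*} [Fintype ι] [DecidableEq ι]
    [NormedAddCommGroup E] [InnerProductSpace ℝ E] {H : HoffmanGraph (Option ι)}
    (hnone : H.IsFat none) {S : Finset ι} (hS : ∀ x, H.graph.Adj none (some x) ↔ x ∈ S)
    {m l : ℝ} (hl : l ^ 2 ≤ 1) {ψ : ι → E}
    (hψ : ∀ x y, ⟪ψ x, ψ y⟫ = H.repGram m (some x) (some y)) {f : E} (hf : ⟪f, f⟫ = 1)
    (hψf : ∀ x, ⟪ψ x, f⟫ = if x ∈ S then l else 0) :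
    ∃ Φ : Option ι → WithLp 2 (E × EuclideanSpace ℝ ι),
      H.IsRep (m + S.card * (1 - l ^ 2)) Φ := by
  set P : Set ι := {x | H.IsSlim (some x)}
  have hSP : ∀ x ∈ S, x ∈ P := fun x hx hfat => H.fat_not_adj hnone hfat ((hS x).2 hx)
  let u : ι → EuclideanSpace ℝ ι := P.indicator fun x =>
    √(S.card * (1 - l ^ 2)) • centeredFamily (EuclideanSpace.basisFun ι ℝ) S x
  have hu : ∀ x y, ⟪u x, u y⟫ =
      (if x = y ∧ x ∈ P then S.card * (1 - l ^ 2) else 0) -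
        if x ∈ S ∧ y ∈ S then 1 - l ^ 2 else 0 := by
    intro x y
    rw [inner_indicator_indicator, real_inner_smul_left, real_inner_smul_right,
      (EuclideanSpace.basisFun ι ℝ).orthonormal.inner_centeredFamily, ← mul_assoc,
      Real.mul_self_sqrt (by positivity)]
    by_cases hS2 : x ∈ S ∧ y ∈ S
    · have hk : (S.card : ℝ) ≠ 0 := Nat.cast_ne_zero.2 (Finset.card_ne_zero_of_mem hS2.1)
      simp only [hS2, hSP x hS2.1, hSP y hS2.2, and_self, if_true, and_true]
      have hcancel : (S.card : ℝ) * (1 - l ^ 2) * (S.card : ℝ)⁻¹ = 1 - l ^ 2 := by field_simp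
      split_ifs <;> linear_combination -hcancel
    · by_cases hxy : x = y
      · subst hxy
        have hx : x ∉ S := fun hx => hS2 ⟨hx, hx⟩
        simp [hx]
      · simp [hS2, hxy]
  have hψf' : ∀ x, ⟪ψ x, f⟫ = if x ∈ (S : Set ι) then l else 0 := by simpa using hψf
  let Φ : Option ι → WithLp 2 (E × EuclideanSpace ℝ ι)
    | none => WithLp.toLp 2 (f, 0)
    | some x => WithLp.toLp 2 (ψ x + (if x ∈ (S : Set ι) then 1 - l else 0) • f, u x)
  refine ⟨Φ, isRep_iff_inner_eq_repGram.2 ?_⟩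
  rintro (_ | x) (_ | y)
  · simp only [Φ, WithLp.prod_inner_apply]
    rw [hf, inner_zero_left, repGram, if_pos rfl, if_pos hnone, add_zero]
  · simp only [Φ, WithLp.prod_inner_apply, inner_unit_add_ite_smul hf hψf']
    simp [repGram, hS]
  · simp only [Φ, WithLp.prod_inner_apply]
    rw [real_inner_comm, inner_unit_add_ite_smul hf hψf', inner_zero_right]
    simp [repGram, hS, H.graph.adj_comm]
  · simp only [Φ, WithLp.prod_inner_apply]
    rw [inner_add_ite_smul hf hψf', hψ, hu]
    simp only [Finset.mem_coe]
    by_cases hxy : x = y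
    · subst hxy
      by_cases hx : H.IsFat (some x)
      · have : x ∉ S := fun h => hSP x h hx
        simp [repGram, hx, this, P, IsSlim]
      · simp [repGram, hx, P, IsSlim]
    · simp [repGram, hxy]

end HoffmanGraph

theorem attach_fat_representation_of_clique_general {V : Type} [Fintype V] (G : HoffmanGraph V)
    (V₁ V₂ V₃ : Set V)
    (hd13 : Disjoint V₁ V₃)
    (hslim : ∀ v ∈ V₂ ∪ V₃, G.IsSlim v)
    (hno13 : ∀ x ∈ V₁, ∀ y ∈ V₃, ¬ G.graph.Adj x y)
    (hall23 : ∀ x ∈ V₂, ∀ y ∈ V₃, G.graph.Adj x y)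
    (hclique : ∀ x ∈ V₃, ∀ y ∈ V₃, x ≠ y → G.graph.Adj x y)
    (h3ne : V₃.Nonempty)
    (m : ℝ) (d : ℕ) (φ : V → EuclideanSpace ℝ (Fin d)) (hφ : G.IsRep m φ)
    (H : HoffmanGraph (Option {v : V // v ∈ V₁ ∪ V₂}))
    (hadj : ∀ x y : {v : V // v ∈ V₁ ∪ V₂},
      H.graph.Adj (some x) (some y) ↔ G.graph.Adj x.1 y.1)
    (hadjf : ∀ x : {v : V // v ∈ V₁ ∪ V₂}, H.graph.Adj none (some x) ↔ x.1 ∈ V₂)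
    (hfat : ∀ x : {v : V // v ∈ V₁ ∪ V₂}, H.IsFat (some x) ↔ G.IsFat x.1)
    (hfatnone : H.IsFat none) :
    ∃ (e : ℕ) (φ' : Option {v : V // v ∈ V₁ ∪ V₂} → EuclideanSpace ℝ (Fin e)),
      H.IsRep (m + (m - 1) * V₂.ncard / (V₃.ncard + m - 1)) φ' := by
  obtain ⟨_ | x₂, -, hx₂⟩ := H.fat_slim_nbr hfatnone
  · exact (H.graph.irrefl hx₂).elim
  replace hx₂ := (hadjf x₂).1 hx₂
  obtain ⟨z₃, hz₃⟩ := h3ne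
  have hm : 1 ≤ m :=
    hφ.one_le_of_adj (hslim _ (.inl hx₂)) (hslim _ (.inr hz₃)) (hall23 _ hx₂ _ hz₃)
  obtain ⟨f, l, hf, hl, hf₂, hf₁⟩ := hφ.exists_unit_of_isClique hm (T := V₃.toFinset)
    ⟨z₃, Set.mem_toFinset.2 hz₃⟩ (fun z hz => hslim z (.inr (Set.mem_toFinset.1 hz)))
    (by rwa [Set.coe_toFinset])
  set S := Finset.univ.filter fun x : {v // v ∈ V₁ ∪ V₂} => x.1 ∈ V₂
  have hψf : ∀ x : {v // v ∈ V₁ ∪ V₂}, ⟪φ x, f⟫ = if x ∈ S then l else 0 := by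
    intro x
    by_cases hx : x.1 ∈ V₂
    · simpa [S, hx] using hf₂ x fun z hz => hall23 _ hx z (Set.mem_toFinset.1 hz)
    · have hx₁ := x.2.resolve_right hx
      simpa [S, hx] using hf₁ x fun z hz =>
        ⟨hd13.ne_of_mem hx₁ (Set.mem_toFinset.1 hz), hno13 _ hx₁ z (Set.mem_toFinset.1 hz)⟩
  have hl₁ : l ^ 2 ≤ 1 := sub_nonneg.1 <| hl ▸
    div_nonneg (by linarith) (by linarith [V₃.toFinset.card.cast_nonneg (α := ℝ)])
  obtain ⟨Φ, hΦ⟩ := HoffmanGraph.exists_isRep_option_of_inner_unit hfatnone (S := S)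
    (by simp [S, hadjf]) hl₁
    (hφ.inner_comp_eq_repGram_some Subtype.val_injective hadj hfat) hf hψf
  rw [show m + (m - 1) * V₂.ncard / (V₃.ncard + m - 1) = m + S.card * (1 - l ^ 2) by
    rw [card_filter_val_mem_eq_ncard Set.subset_union_right, hl, Set.ncard_eq_toFinset_card' V₃]
    ring]
  exact hΦ.exists_euclideanSpace

/-- Lemma 2.13 (the key step of Hoffman's limit theorem): if `𝔊` has vertex set
`V₁ ∪ V₂ ∪ V₃` with `V₂ ∪ V₃` slim, no edges between `V₁` and `V₃`, all edges between
`V₂` and `V₃`, `V₃` a clique, and `𝔊` has a representation of norm `m`, then the Hoffman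
graph `𝔥` on `V₁ ∪ V₂` together with a new fat vertex adjacent to all of `V₂` has a
representation of norm `m + (m-1)|V₂|/(|V₃|+m-1)`. -/
theorem attach_fat_representation_of_clique {V : Type} [Fintype V] (G : HoffmanGraph V)
    (V₁ V₂ V₃ : Set V)
    (hd12 : Disjoint V₁ V₂) (hd13 : Disjoint V₁ V₃) (hd23 : Disjoint V₂ V₃)
    (hunion : V₁ ∪ V₂ ∪ V₃ = Set.univ)
    (hslim : ∀ v ∈ V₂ ∪ V₃, G.IsSlim v)
    (hno13 : ∀ x ∈ V₁, ∀ y ∈ V₃, ¬ G.graph.Adj x y)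
    (hall23 : ∀ x ∈ V₂, ∀ y ∈ V₃, G.graph.Adj x y)
    (hclique : ∀ x ∈ V₃, ∀ y ∈ V₃, x ≠ y → G.graph.Adj x y)
    (h3ne : V₃.Nonempty)
    (m : ℝ) (d : ℕ) (φ : V → EuclideanSpace ℝ (Fin d)) (hφ : G.IsRep m φ)
    (H : HoffmanGraph (Option {v : V // v ∈ V₁ ∪ V₂}))
    (hadj : ∀ x y : {v : V // v ∈ V₁ ∪ V₂},
      H.graph.Adj (some x) (some y) ↔ G.graph.Adj x.1 y.1)
    (hadjf : ∀ x : {v : V // v ∈ V₁ ∪ V₂}, H.graph.Adj none (some x) ↔ x.1 ∈ V₂)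
    (hfat : ∀ x : {v : V // v ∈ V₁ ∪ V₂}, H.IsFat (some x) ↔ G.IsFat x.1)
    (hfatnone : H.IsFat none) :
    ∃ (e : ℕ) (φ' : Option {v : V // v ∈ V₁ ∪ V₂} → EuclideanSpace ℝ (Fin e)),
      H.IsRep (m + (m - 1) * V₂.ncard / (V₃.ncard + m - 1)) φ' :=
  attach_fat_representation_of_clique_general G V₁ V₂ V₃ hd13 hslim hno13 hall23 hclique h3ne m d φ
    hφ H hadj hadjf hfat hfatnone
end

section
/- Let 𝔥 be a fat Hoffman graph with smallest eigenvalue at least −3 and let ψ be a reduced representation of norm 3 of 𝔥. Then for any two distinct slim vertices x, y of 𝔥, the inner product (ψ(x), ψ(y)) belongs to {1, 0, −1}. -/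
attribute [local instance] Classical.propDecidable

open scoped RealInnerProductSpace

/-! Both vectors have squared norm `3 - |N^f|`, and the common fat neighbours are among the
fat neighbours of each, so `2 |(ψ x, ψ y)| ≤ ‖ψ x‖² + ‖ψ y‖² ≤ 2 (3 - c)` with
`c = |N^f(x, y)|`. For adjacent `x, y` the inner product is `1 - c`, which forces `c ≤ 2`;
for non-adjacent ones it is `-c`, which forces `c ≤ 1`. -/

namespace HoffmanGraph

variable {V : Type*} (H : HoffmanGraph V)

lemma commonFat_le_fatDeg_left [Finite V] (x y : V) : H.commonFat x y ≤ H.fatDeg x :=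
  Set.ncard_le_ncard (fun _ hf => ⟨hf.1, hf.2.1⟩) (Set.toFinite _)

lemma commonFat_le_fatDeg_right [Finite V] (x y : V) : H.commonFat x y ≤ H.fatDeg y :=
  H.commonFat_comm x y ▸ H.commonFat_le_fatDeg_left y x

variable {H} {E : Type*} [NormedAddCommGroup E] [InnerProductSpace ℝ E] {m : ℝ} {ψ : V → E}

lemma IsReducedRep.norm_sq (hψ : H.IsReducedRep m ψ) {x : V} (hx : H.IsSlim x) :
    ‖ψ x‖ ^ 2 = m - H.fatDeg x := by
  rw [← real_inner_self_eq_norm_sq, hψ.1 x hx]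

lemma IsReducedRep.abs_inner_le [Finite V] (hψ : H.IsReducedRep m ψ) {x y : V}
    (hx : H.IsSlim x) (hy : H.IsSlim y) :
    |⟪ψ x, ψ y⟫| ≤ m - H.commonFat x y := by
  have hcx : (H.commonFat x y : ℝ) ≤ H.fatDeg x := by
    exact_mod_cast H.commonFat_le_fatDeg_left x y
  have hcy : (H.commonFat x y : ℝ) ≤ H.fatDeg y := by
    exact_mod_cast H.commonFat_le_fatDeg_right x y
  calc |⟪ψ x, ψ y⟫| ≤ ‖ψ x‖ * ‖ψ y‖ := abs_real_inner_le_norm _ _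
    _ ≤ (‖ψ x‖ ^ 2 + ‖ψ y‖ ^ 2) / 2 := by linarith [two_mul_le_add_sq ‖ψ x‖ ‖ψ y‖]
    _ = (m - H.fatDeg x + (m - H.fatDeg y)) / 2 := by rw [hψ.norm_sq hx, hψ.norm_sq hy]
    _ ≤ m - H.commonFat x y := by linarith

end HoffmanGraph

theorem reducedRep_inner_mem_of_fat_general {V : Type} [Fintype V] (H : HoffmanGraph V)
    {E : Type*} [NormedAddCommGroup E] [InnerProductSpace ℝ E]
    (ψ : V → E) (hψ : H.IsReducedRep 3 ψ) :
    ∀ x y, H.IsSlim x → H.IsSlim y → x ≠ y → ⟪ψ x, ψ y⟫ ∈ ({1, 0, -1} : Set ℝ) := by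
  intro x y hx hy hne
  have hle := hψ.abs_inner_le hx hy
  by_cases hadj : H.graph.Adj x y
  · rw [hψ.2.1 x y hx hy hadj] at hle ⊢
    have hc : H.commonFat x y < 3 := by
      have : (H.commonFat x y : ℝ) < 3 := by linarith [neg_abs_le (1 - (H.commonFat x y : ℝ))]
      exact_mod_cast this
    interval_cases H.commonFat x y <;> norm_num
  · rw [hψ.2.2 x y hx hy hne hadj, abs_neg, Nat.abs_cast] at hle
    rw [hψ.2.2 x y hx hy hne hadj]
    have hc : H.commonFat x y < 2 := by
      have : (H.commonFat x y : ℝ) < 2 := by linarith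
      exact_mod_cast this
    interval_cases H.commonFat x y <;> norm_num

/-- Lemma 3.6: if `𝔥` is a fat Hoffman graph with smallest eigenvalue at least `-3` and
`ψ` is a reduced representation of norm `3`, then for distinct slim vertices `x`, `y`
the inner product `(ψ(x), ψ(y))` lies in `{1, 0, -1}`. -/
theorem reducedRep_inner_mem_of_fat {V : Type} [Fintype V] (H : HoffmanGraph V)
    (hfat : H.IsFatGraph) (hmin : -3 ≤ H.lambdaMin)
    {E : Type*} [NormedAddCommGroup E] [InnerProductSpace ℝ E]
    (ψ : V → E) (hψ : H.IsReducedRep 3 ψ) :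
    ∀ x y, H.IsSlim x → H.IsSlim y → x ≠ y → ⟪ψ x, ψ y⟫ ∈ ({1, 0, -1} : Set ℝ) :=
  reducedRep_inner_mem_of_fat_general H ψ hψ
end

section
/- Let 𝔥 be a fat indecomposable (−3)-saturated Hoffman graph whose reduced representation ψ of norm 3 takes values in the standard lattice ℤⁿ. Suppose slim vertices s, t⁺, t⁻ share a common fat neighbor and are represented as ψ(s) = e₁ + e₂ and ψ(t^±) = −e₁ ± e₃ (where e_i are standard basis vectors of ℤⁿ). If there exists a slim vertex t with ψ(t) = −e₂ + e_j for some j ∉ {1, 2, 3}, then both t⁺ and t⁻ have s as their unique neighbor in S^−(𝔥). -/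
attribute [local instance] Classical.propDecidable

open scoped RealInnerProductSpace

/-!
Since `ψ(s)` and `ψ(t^±)` have norm `2`, the common fat neighbour `g` is the only fat neighbour
of `s` and of `t^±`; as `(ψ(s), ψ(t)) = -1`, also `t` is adjacent to `g`. A neighbour `u` of
`t^±` in `S⁻(𝔥)` then satisfies `(ψ(t^±), ψ(u)) = -1` and is adjacent to `g`, and distinct slim
neighbours of `g` have non-positive inner products. If `u ≠ s`, the inequalities against `s`,
`t`, `t^∓` together with `ψ(t⁺) + ψ(t⁻) = -2e₁` give `u₁ > 0`, `u₁ + u₂ ≤ 0` and `u_j ≤ u₂` for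
the coordinates of `ψ(u)`; by integrality `‖ψ(u)‖² ≥ u₁² + u₂² + u_j² ≥ 3`, whereas every slim
vertex of a fat Hoffman graph has `‖ψ(u)‖² ≤ 2`.
-/

namespace EuclideanSpace

variable {ι : Type*} [Fintype ι]

lemma sum_sq_le_inner_self (v : EuclideanSpace ℝ ι) (s : Finset ι) :
    ∑ i ∈ s, v i ^ 2 ≤ ⟪v, v⟫ :=
  calc ∑ i ∈ s, v i ^ 2 ≤ ∑ i, v i ^ 2 :=
        Finset.sum_le_sum_of_subset_of_nonneg (Finset.subset_univ s) fun i _ _ => sq_nonneg _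
    _ = ⟪v, v⟫ := by rw [real_inner_self_eq_norm_sq, EuclideanSpace.real_norm_sq_eq]

lemma three_le_inner_self_of_int_coord (v : EuclideanSpace ℝ ι) {a b c : ι} (hab : a ≠ b)
    (hac : a ≠ c) (hbc : b ≠ c) (ha : ∃ k : ℤ, v a = k) (ha0 : 0 < v a)
    (hab0 : v a + v b ≤ 0) (hcb : v c ≤ v b) : 3 ≤ ⟪v, v⟫ := by
  obtain ⟨k, hk⟩ := ha
  have ha1 : 1 ≤ v a := by
    rw [hk] at ha0 ⊢
    exact Int.cast_one_le_of_pos (Int.cast_pos.mp ha0)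
  have hsq := sum_sq_le_inner_self v {a, b, c}
  rw [Finset.sum_insert (by simp [hab, hac]), Finset.sum_pair hbc] at hsq
  nlinarith

end EuclideanSpace

namespace HoffmanGraph

section FatNeighbors

variable {V : Type*} [Finite V] (H : HoffmanGraph V)

lemma commonFat_le_fatDeg (x y : V) : H.commonFat x y ≤ H.fatDeg x :=
  Set.ncard_le_ncard fun _ hf => ⟨hf.1, hf.2.1⟩

lemma fatDeg_pos {x g : V} (hg : H.IsFat g) (hxg : H.graph.Adj x g) : 0 < H.fatDeg x :=
  (Set.ncard_pos (Set.toFinite _)).mpr ⟨g, hg, hxg⟩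

lemma commonFat_pos {x y g : V} (hg : H.IsFat g) (hxg : H.graph.Adj x g)
    (hyg : H.graph.Adj y g) : 0 < H.commonFat x y :=
  (Set.ncard_pos (Set.toFinite _)).mpr ⟨g, hg, hxg, hyg⟩

lemma adj_of_commonFat_pos {x y g : V} (hx : H.fatDeg x = 1) (hg : H.IsFat g)
    (hxg : H.graph.Adj x g) (hxy : 0 < H.commonFat x y) : H.graph.Adj y g := by
  obtain ⟨f, hf, hxf, hyf⟩ := (Set.ncard_pos (Set.toFinite _)).mp hxy
  rwa [(Set.ncard_le_one_iff (Set.toFinite _)).mp hx.le ⟨hf, hxf⟩ ⟨hg, hxg⟩] at hyf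

end FatNeighbors

namespace IsReducedRep

variable {V : Type*} {H : HoffmanGraph V} {E : Type*} [NormedAddCommGroup E]
  [InnerProductSpace ℝ E] {m : ℝ} {ψ : V → E}

lemma specialMinus_adj_iff (hψ : H.IsReducedRep m ψ) {x y : H.Slim} :
    H.specialMinus.Adj x y ↔ x ≠ y ∧ ⟪ψ x, ψ y⟫ < 0 := by
  by_cases hxy : x = y
  · simp [hxy]
  by_cases hadj : H.graph.Adj x y
  · simp [specialMinus, hxy, hadj, hψ.2.1 x y x.2 y.2 hadj]
  · simp [specialMinus, hxy, hadj, hψ.2.2 x y x.2 y.2 (Subtype.coe_ne_coe.mpr hxy) hadj]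

lemma fatDeg_eq_one_of_inner_self (hψ : H.IsReducedRep m ψ) {x : V} (hx : H.IsSlim x)
    (h : ⟪ψ x, ψ x⟫ = m - 1) : H.fatDeg x = 1 := by
  have := hψ.1 x hx
  exact_mod_cast (by linarith : (H.fatDeg x : ℝ) = 1)

variable [Finite V]

lemma inner_self_le_of_isFatGraph (hψ : H.IsReducedRep m ψ) (hfat : H.IsFatGraph) {x : V}
    (hx : H.IsSlim x) : ⟪ψ x, ψ x⟫ ≤ m - 1 := by
  obtain ⟨g, hg, hxg⟩ := hfat x hx
  rw [hψ.1 x hx]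
  linarith [(Nat.one_le_cast (α := ℝ)).mpr (H.fatDeg_pos hg hxg)]

lemma inner_nonpos_of_adj_fat (hψ : H.IsReducedRep m ψ) {x y g : V} (hx : H.IsSlim x)
    (hy : H.IsSlim y) (hxy : x ≠ y) (hg : H.IsFat g) (hxg : H.graph.Adj x g)
    (hyg : H.graph.Adj y g) : ⟪ψ x, ψ y⟫ ≤ 0 := by
  have := (Nat.one_le_cast (α := ℝ)).mpr (H.commonFat_pos hg hxg hyg)
  by_cases hadj : H.graph.Adj x y
  · linarith [hψ.2.1 x y hx hy hadj]
  · linarith [hψ.2.2 x y hx hy hxy hadj]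

lemma inner_eq_neg_one_and_adj_of_inner_neg (hψ : H.IsReducedRep m ψ) {x y g : V}
    (hx : H.IsSlim x) (hy : H.IsSlim y) (hxy : x ≠ y) (hx1 : H.fatDeg x = 1)
    (hg : H.IsFat g) (hxg : H.graph.Adj x g) (h : ⟪ψ x, ψ y⟫ < 0) :
    ⟪ψ x, ψ y⟫ = -1 ∧ H.graph.Adj y g := by
  have hle : H.commonFat x y ≤ 1 := hx1 ▸ H.commonFat_le_fatDeg x y
  have hadj : ¬ H.graph.Adj x y := fun hadj => by
    have : (H.commonFat x y : ℝ) ≤ 1 := by exact_mod_cast hle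
    linarith [hψ.2.1 x y hx hy hadj]
  rw [hψ.2.2 x y hx hy hxy hadj] at h ⊢
  have hpos : 0 < H.commonFat x y := by exact_mod_cast neg_neg_iff_pos.mp h
  refine ⟨?_, H.adj_of_commonFat_pos hx1 hg hxg hpos⟩
  rw [le_antisymm hle hpos, Nat.cast_one]

end IsReducedRep

section Configuration

variable {V : Type*} [Finite V] {H : HoffmanGraph V} {n : ℕ}
  {ψ : V → EuclideanSpace ℝ (Fin n)}

open EuclideanSpace

lemma eq_of_inner_eq_neg_one_of_adj_fat (hψ : H.IsReducedRep 3 ψ) (hfat : H.IsFatGraph)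
    {s x y t u g : V} (hs : H.IsSlim s) (hy : H.IsSlim y) (ht : H.IsSlim t) (hu : H.IsSlim u)
    (hg : H.IsFat g) (hsg : H.graph.Adj s g) (hyg : H.graph.Adj y g) (htg : H.graph.Adj t g)
    (hug : H.graph.Adj u g) {i₁ i₂ j : Fin n} (h12 : i₁ ≠ i₂) (hj1 : j ≠ i₁) (hj2 : j ≠ i₂)
    (hψs : ψ s = single i₁ 1 + single i₂ 1) (hψt : ψ t = -single i₂ 1 + single j 1)
    (hψxy : ψ x + ψ y = single i₁ (-2)) (hint : ∃ k : ℤ, ψ u i₁ = k)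
    (hux : ⟪ψ u, ψ x⟫ = -1) (huy : u ≠ y) (hut : u ≠ t) : u = s := by
  by_contra hus
  have hus' : ψ u i₁ + ψ u i₂ ≤ 0 := by
    simpa [hψs, inner_add_right, inner_single_right, add_comm]
      using hψ.inner_nonpos_of_adj_fat hu hs hus hg hug hsg
  have hut' : ψ u j ≤ ψ u i₂ := by
    have := hψ.inner_nonpos_of_adj_fat hu ht hut hg hug htg
    simp [hψt, inner_add_right, inner_single_right] at this
    linarith
  have hu1 : 0 < ψ u i₁ := by
    have := hψ.inner_nonpos_of_adj_fat hu hy huy hg hug hyg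
    have hxy : ⟪ψ u, ψ x + ψ y⟫ = -2 * ψ u i₁ := by simp [hψxy, inner_single_right]
    rw [inner_add_right, hux] at hxy
    linarith
  linarith [three_le_inner_self_of_int_coord (ψ u) h12 hj1.symm hj2.symm hint hu1 hus' hut',
    hψ.inner_self_le_of_isFatGraph hfat hu]

lemma specialMinus_neighborSet_eq_singleton (hψ : H.IsReducedRep 3 ψ) (hfat : H.IsFatGraph)
    (hint : ∀ v, H.IsSlim v → ∀ i, ∃ k : ℤ, ψ v i = (k : ℝ))
    {s x y t g : V} (hs : H.IsSlim s) (hx : H.IsSlim x) (hy : H.IsSlim y) (ht : H.IsSlim t)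
    (hg : H.IsFat g) (hsg : H.graph.Adj s g) (hxg : H.graph.Adj x g) (hyg : H.graph.Adj y g)
    (htg : H.graph.Adj t g)
    {i₁ i₂ i₃ j : Fin n} (h12 : i₁ ≠ i₂) (h13 : i₁ ≠ i₃) (h23 : i₂ ≠ i₃)
    (hj1 : j ≠ i₁) (hj2 : j ≠ i₂) (hj3 : j ≠ i₃) {ε : ℝ} (hε : ε ^ 2 = 1)
    (hψs : ψ s = single i₁ 1 + single i₂ 1)
    (hψx : ψ x = -single i₁ 1 + single i₃ ε) (hψy : ψ y = -single i₁ 1 - single i₃ ε)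
    (hψt : ψ t = -single i₂ 1 + single j 1) :
    H.specialMinus.neighborSet ⟨x, hx⟩ = {⟨s, hs⟩} := by
  have hxx : ⟪ψ x, ψ x⟫ = 3 - 1 := by
    simp only [hψx, inner_add_left, inner_add_right, inner_neg_left, inner_neg_right,
      inner_single_left, PiLp.single_apply]
    simp [h13, h13.symm]; linarith
  have hxs : ⟪ψ x, ψ s⟫ = -1 := by
    simp [hψx, hψs, inner_add_left, inner_single_left, h12, h13.symm, h23.symm]
  have hxy : ⟪ψ x, ψ y⟫ = 0 := by
    simp [hψx, hψy, inner_add_left, inner_sub_right, inner_single_left, h13, h13.symm]; linarith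
  have hxt : ⟪ψ x, ψ t⟫ = 0 := by
    simp [hψx, hψt, inner_add_left, inner_single_left, h12, hj1, hj3, h23.symm]
  have hsum : ψ x + ψ y = single i₁ (-2) := by
    rw [hψx, hψy, add_add_sub_cancel, ← PiLp.single_neg, ← PiLp.single_add]; norm_num
  have hx1 := hψ.fatDeg_eq_one_of_inner_self hx hxx
  ext ⟨u, hu⟩
  rw [SimpleGraph.mem_neighborSet, hψ.specialMinus_adj_iff, Set.mem_singleton_iff]
  constructor
  · rintro ⟨hxu, hxu_neg⟩
    obtain ⟨hxu_eq, hug⟩ := hψ.inner_eq_neg_one_and_adj_of_inner_neg hx hu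
      (fun h => hxu (Subtype.ext h)) hx1 hg hxg hxu_neg
    refine Subtype.ext (eq_of_inner_eq_neg_one_of_adj_fat hψ hfat hs hy ht hu hg hsg hyg htg hug
      h12 hj1 hj2 hψs hψt hsum (hint u hu i₁) (by rwa [real_inner_comm]) ?_ ?_)
    · rintro rfl; linarith
    · rintro rfl; linarith
  · rintro ⟨⟩
    exact ⟨fun h => by cases h; linarith, by linarith⟩

end Configuration

end HoffmanGraph

theorem unique_specialMinus_neighbor_of_configuration_general {V : Type} [Fintype V]
    (H : HoffmanGraph V) (hfat : H.IsFatGraph)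
    (n : ℕ) (ψ : V → EuclideanSpace ℝ (Fin n)) (hψ : H.IsReducedRep 3 ψ)
    (hint : ∀ v, H.IsSlim v → ∀ i, ∃ k : ℤ, ψ v i = (k : ℝ))
    (s tp tm t : V) (hs : H.IsSlim s) (htp : H.IsSlim tp) (htm : H.IsSlim tm)
    (ht : H.IsSlim t)
    (hcommon : ∃ g, H.IsFat g ∧ H.graph.Adj s g ∧ H.graph.Adj tp g ∧ H.graph.Adj tm g)
    (i₁ i₂ i₃ j : Fin n) (h12 : i₁ ≠ i₂) (h13 : i₁ ≠ i₃) (h23 : i₂ ≠ i₃)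
    (hj1 : j ≠ i₁) (hj2 : j ≠ i₂) (hj3 : j ≠ i₃)
    (hψs : ψ s = EuclideanSpace.single i₁ 1 + EuclideanSpace.single i₂ 1)
    (hψtp : ψ tp = -EuclideanSpace.single i₁ 1 + EuclideanSpace.single i₃ 1)
    (hψtm : ψ tm = -EuclideanSpace.single i₁ 1 - EuclideanSpace.single i₃ 1)
    (hψt : ψ t = -EuclideanSpace.single i₂ 1 + EuclideanSpace.single j 1) :
    H.specialMinus.neighborSet ⟨tp, htp⟩ = {⟨s, hs⟩} ∧
    H.specialMinus.neighborSet ⟨tm, htm⟩ = {⟨s, hs⟩} := by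
  obtain ⟨g, hg, hsg, htpg, htmg⟩ := hcommon
  have hss : ⟪ψ s, ψ s⟫ = 3 - 1 := by
    simp only [hψs, inner_add_left, inner_add_right, EuclideanSpace.inner_single_left,
      PiLp.single_apply]
    simp [h12, h12.symm]; norm_num
  have hst : ⟪ψ s, ψ t⟫ = -1 := by
    simp [hψs, hψt, inner_add_left, EuclideanSpace.inner_single_left, hj1, hj2, h12.symm]
  have htg : H.graph.Adj t g := (hψ.inner_eq_neg_one_and_adj_of_inner_neg hs ht
    (by rintro rfl; linarith) (hψ.fatDeg_eq_one_of_inner_self hs hss) hg hsg (by linarith)).2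
  have hψtm' : ψ tm = -EuclideanSpace.single i₁ 1 + EuclideanSpace.single i₃ (-1) := by
    simp [hψtm, sub_eq_add_neg, PiLp.single_neg]
  have hψtp' : ψ tp = -EuclideanSpace.single i₁ 1 - EuclideanSpace.single i₃ (-1) := by
    simp [hψtp, PiLp.single_neg]
  exact ⟨HoffmanGraph.specialMinus_neighborSet_eq_singleton hψ hfat hint hs htp htm ht hg hsg
      htpg htmg htg h12 h13 h23 hj1 hj2 hj3 (one_pow 2) hψs hψtp hψtm hψt,
    HoffmanGraph.specialMinus_neighborSet_eq_singleton hψ hfat hint hs htm htp ht hg hsg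
      htmg htpg htg h12 h13 h23 hj1 hj2 hj3 (by norm_num) hψs hψtm' hψtp' hψt⟩

/-- Lemma 4.7: suppose slim vertices `s, t⁺, t⁻` share a common fat neighbor and are
represented as `ψ(s) = e₁ + e₂`, `ψ(t^±) = -e₁ ± e₃`.  If some slim vertex `t` has
`ψ(t) = -e₂ + e_j` with `j ∉ {1,2,3}`, then `t⁺` and `t⁻` have `s` as their unique
neighbor in `S⁻(𝔥)`. -/
theorem unique_specialMinus_neighbor_of_configuration {V : Type} [Fintype V]
    (H : HoffmanGraph V) (hfat : H.IsFatGraph) (hind : H.Indecomposable)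
    (hsat : H.IsSaturated (-3))
    (n : ℕ) (ψ : V → EuclideanSpace ℝ (Fin n)) (hψ : H.IsReducedRep 3 ψ)
    (hint : ∀ v, H.IsSlim v → ∀ i, ∃ k : ℤ, ψ v i = (k : ℝ))
    (s tp tm t : V) (hs : H.IsSlim s) (htp : H.IsSlim tp) (htm : H.IsSlim tm)
    (ht : H.IsSlim t)
    (hcommon : ∃ g, H.IsFat g ∧ H.graph.Adj s g ∧ H.graph.Adj tp g ∧ H.graph.Adj tm g)
    (i₁ i₂ i₃ j : Fin n) (h12 : i₁ ≠ i₂) (h13 : i₁ ≠ i₃) (h23 : i₂ ≠ i₃)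
    (hj1 : j ≠ i₁) (hj2 : j ≠ i₂) (hj3 : j ≠ i₃)
    (hψs : ψ s = EuclideanSpace.single i₁ 1 + EuclideanSpace.single i₂ 1)
    (hψtp : ψ tp = -EuclideanSpace.single i₁ 1 + EuclideanSpace.single i₃ 1)
    (hψtm : ψ tm = -EuclideanSpace.single i₁ 1 - EuclideanSpace.single i₃ 1)
    (hψt : ψ t = -EuclideanSpace.single i₂ 1 + EuclideanSpace.single j 1) :
    H.specialMinus.neighborSet ⟨tp, htp⟩ = {⟨s, hs⟩} ∧
    H.specialMinus.neighborSet ⟨tm, htm⟩ = {⟨s, hs⟩} :=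
  unique_specialMinus_neighbor_of_configuration_general H hfat n ψ hψ hint s tp tm t hs htp htm ht
    hcommon i₁ i₂ i₃ j h12 h13 h23 hj1 hj2 hj3 hψs hψtp hψtm hψt
end
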